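/- If S is a finite nilpotent semigroup of nilpotency index n (every product of n elements is 0), then Cayley(S) is nilpotent of index at most n; in particular Cayley(S) is finite. -/
import Mathlib

/-- φ_s([a_1,...,a_n]) = [s a_1, s a_1 a_2, ..., s a_1 ⋯ a_n] -/
def phi {S : Type*} [Mul S] (s : S) (l : List S) : List S :=
  (l.scanl (· * ·) s).tail

/-- Cayley(S): the subsemigroup of functions on words over S¹ = WithOne S
(under composition) generated by the maps φ_s, s ∈ S. -/
def Cayley (S : Type*) [Semigroup S] : Subsemigroup (Function.End (List (WithOne S))) :=
  Subsemigroup.closure {f | ∃ s : S, f = phi (s : WithOne S)}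

section Aux

variable {M : Type*}

theorem CN.phi_cons [Mul M] (s a : M) (l : List M) :
    phi s (a :: l) = (s * a) :: phi (s * a) l := by
  cases l <;> simp [phi, List.scanl]

theorem CN.phi_length [Mul M] (s : M) (l : List M) : (phi s l).length = l.length := by
  simp [phi, List.length_scanl]

variable {S : Type*} [SemigroupWithZero S]

theorem CN.one_or_coe (x : WithOne S) : x = 1 ∨ ∃ b : S, x = ↑b :=
  Option.casesOn x (Or.inl rfl) (fun b => Or.inr ⟨b, rfl⟩)

/-- Elements of `WithOne S` that are products containing at least `k` factors from `S`. -/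
def CN.Tset : ℕ → Set (WithOne S)
  | 0 => Set.univ
  | k + 1 => {x | ∃ (a : S) (w : List S), k + 1 ≤ w.length + 1 ∧
      x = ((w.foldl (· * ·) a : S) : WithOne S)}

theorem CN.Tset_succ_subset {k : ℕ} : (CN.Tset (k + 1) : Set (WithOne S)) ⊆ CN.Tset k := by
  cases k with
  | zero => intro x _; trivial
  | succ j =>
    rintro x ⟨a, w, hw, rfl⟩
    exact ⟨a, w, by omega, rfl⟩

theorem CN.Tset_mul_right {k : ℕ} {x : WithOne S} (hx : x ∈ CN.Tset (k + 1)) (y : WithOne S) :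
    x * y ∈ CN.Tset (k + 1) := by
  obtain ⟨a, w, hw, rfl⟩ := hx
  rcases CN.one_or_coe y with rfl | ⟨b, rfl⟩
  · simpa using ⟨a, w, hw, rfl⟩
  · refine ⟨a, w ++ [b], by simpa [List.length_append] using hw.trans (Nat.le_succ _), ?_⟩
    simp [List.foldl_append]

theorem CN.Tset_coe_mul {k : ℕ} (s : S) {x : WithOne S} (hx : x ∈ CN.Tset k) :
    (s : WithOne S) * x ∈ CN.Tset (k + 1) := by
  have key : ∀ (w : List S) (a t : S),
      (t : WithOne S) * ((w.foldl (· * ·) a : S) : WithOne S)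
        = (((a :: w).foldl (· * ·) t : S) : WithOne S) := by
    intro w
    induction w with
    | nil => intro a t; simp
    | cons b u ih =>
      intro a t
      simpa [List.foldl_cons, mul_assoc] using ih (a * b) t
  cases k with
  | zero =>
    rcases CN.one_or_coe x with rfl | ⟨b, rfl⟩
    · exact ⟨s, [], by simp, by simp⟩
    · exact ⟨s, [b], by simp, by simp⟩
  | succ j =>
    obtain ⟨a, w, hw, rfl⟩ := hx
    exact ⟨s, a :: w, by simpa using Nat.succ_le_succ hw, key w a s⟩

theorem CN.phi_mem_Tset {k : ℕ} : ∀ (l : List (WithOne S)) (s : WithOne S),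
    s ∈ CN.Tset (k + 1) → ∀ x ∈ phi s l, x ∈ CN.Tset (k + 1) := by
  intro l
  induction l with
  | nil => intro s _ x hx; simp [phi] at hx
  | cons a t ih =>
    intro s hs x hx
    rw [CN.phi_cons] at hx
    rcases List.mem_cons.1 hx with h | h
    · exact h ▸ CN.Tset_mul_right hs a
    · exact ih (s * a) (CN.Tset_mul_right hs a) x h

/-- `f` raises the depth by at least `j`. -/
def CN.Raise (j : ℕ) (f : Function.End (List (WithOne S))) : Prop :=
  ∀ (k : ℕ) (l : List (WithOne S)), (∀ x ∈ l, x ∈ CN.Tset k) → ∀ x ∈ f l, x ∈ CN.Tset (k + j)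

theorem CN.raise_gen (s : S) : CN.Raise 1 (phi (s : WithOne S)) := by
  intro k l hl x hx
  cases l with
  | nil => simp [phi] at hx
  | cons a t =>
    rw [CN.phi_cons] at hx
    have h1 : (s : WithOne S) * a ∈ CN.Tset (k + 1) :=
      CN.Tset_coe_mul s (hl a (by simp))
    rcases List.mem_cons.1 hx with h | h
    · exact h ▸ h1
    · exact CN.phi_mem_Tset t _ h1 x h

theorem CN.raise_mul {j : ℕ} {f g : Function.End (List (WithOne S))}
    (hf : CN.Raise j f) (hg : CN.Raise 1 g) : CN.Raise (j + 1) (f * g) := by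
  intro k l hl x hx
  have : x ∈ CN.Tset (k + 1 + j) := hf (k + 1) (g l) (hg k l hl) x hx
  simpa [Nat.add_assoc, Nat.add_comm 1 j] using this

theorem CN.raise_foldl : ∀ (fs : List (Function.End (List (WithOne S))))
    (g : Function.End (List (WithOne S))) (j : ℕ), CN.Raise j g →
    (∀ f ∈ fs, CN.Raise 1 f) → CN.Raise (j + fs.length) (fs.foldl (· * ·) g) := by
  intro fs
  induction fs with
  | nil => intro g j hg _; simpa using hg
  | cons a t ih =>
    intro g j hg hfs
    have h := ih (g * a) (j + 1) (CN.raise_mul hg (hfs a (by simp)))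
      (fun f hf => hfs f (List.mem_cons_of_mem a hf))
    simpa [List.foldl_cons, Nat.add_assoc, Nat.add_comm 1 t.length] using h

theorem CN.len_pres {f : Function.End (List (WithOne S))} (hf : f ∈ Cayley S) :
    ∀ l, (f l).length = l.length := by
  induction hf using Subsemigroup.closure_induction with
  | mem x hx => obtain ⟨s, rfl⟩ := hx; exact fun l => CN.phi_length _ l
  | mul x y hx hy px py => intro l; exact (px (y l)).trans (py l)

theorem CN.raise_of_mem {f : Function.End (List (WithOne S))} (hf : f ∈ Cayley S) :
    CN.Raise 1 f := by
  induction hf using Subsemigroup.closure_induction with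
  | mem x hx => obtain ⟨s, rfl⟩ := hx; exact CN.raise_gen s
  | mul x y hx hy px py =>
    intro k l hl z hz
    exact CN.Tset_succ_subset (px (k + 1) (y l) (py k l hl) z hz)

theorem CN.coe_zero_mul (x : WithOne S) : ((0 : S) : WithOne S) * x = ((0 : S) : WithOne S) := by
  rcases CN.one_or_coe x with rfl | ⟨b, rfl⟩
  · simp
  · rw [← WithOne.coe_mul, zero_mul]

theorem CN.phi_zero (l : List (WithOne S)) :
    phi ((0 : S) : WithOne S) l = List.replicate l.length ((0 : S) : WithOne S) := by
  induction l with
  | nil => rfl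
  | cons a t ih => rw [CN.phi_cons, CN.coe_zero_mul, ih]; rfl

theorem CN.mul_foldl_end {M : Type*} [Monoid M] : ∀ (fs : List M) (g x : M),
    x * fs.foldl (· * ·) g = fs.foldl (· * ·) (x * g) := by
  intro fs
  induction fs with
  | nil => intro g x; rfl
  | cons a t ih => intro g x; simpa [mul_assoc] using ih (g * a) x

theorem CN.mem_closure_rep {M : Type*} [Monoid M] {s : Set M} {x : M}
    (hx : x ∈ Subsemigroup.closure s) :
    ∃ (g : M) (fs : List M), g ∈ s ∧ (∀ f ∈ fs, f ∈ s) ∧ x = fs.foldl (· * ·) g := by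
  induction hx using Subsemigroup.closure_induction with
  | mem y hy => exact ⟨y, [], hy, by simp, rfl⟩
  | mul y z hy hz py pz =>
    obtain ⟨g, fs, hg, hfs, rfl⟩ := py
    obtain ⟨g', fs', hg', hfs', rfl⟩ := pz
    refine ⟨g, fs ++ g' :: fs', hg, ?_, ?_⟩
    · intro f hf
      rcases List.mem_append.1 hf with h | h
      · exact hfs f h
      · rcases List.mem_cons.1 h with h | h
        · exact h ▸ hg'
        · exact hfs' f h
    · rw [List.foldl_append, List.foldl_cons, ← CN.mul_foldl_end]

/-- The generator of `Cayley S` associated to `s : S`, as an element of `Function.End`. -/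
def CN.gen (s : S) : Function.End (List (WithOne S)) := phi (s : WithOne S)

end Aux

/-- If S is a finite nilpotent semigroup of index n (every product of n or more
elements is 0), then Cayley(S) is nilpotent of index at most n: every product of
n or more elements of Cayley(S) equals the zero φ_0 of Cayley(S); in particular
Cayley(S) is finite. -/
theorem cayley_of_nilpotent {S : Type*} [SemigroupWithZero S] [Fintype S] (n : ℕ)
    (hnil : ∀ (a : S) (l : List S), n ≤ l.length + 1 → l.foldl (· * ·) a = 0) :
    (∀ (g : Function.End (List (WithOne S))) (fs : List (Function.End (List (WithOne S)))),
        g ∈ Cayley S → (∀ f ∈ fs, f ∈ Cayley S) → n ≤ fs.length + 1 →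
        fs.foldl (· * ·) g = phi ((0 : S) : WithOne S)) ∧
      (Cayley S : Set (Function.End (List (WithOne S)))).Finite := by
  have main : ∀ (g : Function.End (List (WithOne S))) (fs : List (Function.End (List (WithOne S)))),
      g ∈ Cayley S → (∀ f ∈ fs, f ∈ Cayley S) → n ≤ fs.length + 1 →
      fs.foldl (· * ·) g = phi ((0 : S) : WithOne S) := by
    intro g fs hg hfs hn
    funext l
    set h := fs.foldl (· * ·) g with hh
    have hlen : (h l).length = l.length := by
      have key : ∀ (fs' : List (Function.End (List (WithOne S))))
          (g' : Function.End (List (WithOne S))),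
          g' ∈ Cayley S → (∀ f ∈ fs', f ∈ Cayley S) →
          ∀ m, ((fs'.foldl (· * ·) g') m).length = m.length := by
        intro fs'
        induction fs' with
        | nil => intro g' hg' _ m; exact CN.len_pres hg' m
        | cons a t ih =>
          intro g' hg' hfs' m
          exact ih (g' * a) (mul_mem hg' (hfs' a (by simp)))
            (fun f hf => hfs' f (List.mem_cons_of_mem a hf)) m
      exact key fs g hg hfs l
    have hraise : CN.Raise (1 + fs.length) h :=
      CN.raise_foldl fs g 1 (CN.raise_of_mem hg) (fun f hf => CN.raise_of_mem (hfs f hf))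
    have hzero : ∀ x ∈ h l, x = ((0 : S) : WithOne S) := by
      intro x hx
      have hx' : x ∈ CN.Tset (0 + (1 + fs.length)) :=
        hraise 0 l (by intro y _; trivial) x hx
      have hx'' : x ∈ CN.Tset (fs.length + 1) := by
        simpa [Nat.add_comm] using hx'
      obtain ⟨a, w, hw, rfl⟩ := hx''
      rw [hnil a w (le_trans hn hw)]
    rw [CN.phi_zero, ← hlen]
    exact List.eq_replicate_length.2 hzero
  refine ⟨main, ?_⟩
  have hsub : (Cayley S : Set (Function.End (List (WithOne S)))) ⊆
      insert (phi ((0 : S) : WithOne S))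
        ((fun w : List S => (w.map CN.gen).prod) '' {w : List S | w.length ≤ n}) := by
    intro x hx
    obtain ⟨g, fs, hg, hfs, rfl⟩ := CN.mem_closure_rep hx
    by_cases hlen : n ≤ fs.length + 1
    · left
      exact main g fs (Subsemigroup.subset_closure hg)
        (fun f hf => Subsemigroup.subset_closure (hfs f hf)) hlen
    · right
      have exw : ∀ (l : List (Function.End (List (WithOne S)))),
          (∀ y ∈ l, ∃ s : S, y = phi ((s : S) : WithOne S)) →
          ∃ w : List S, l = w.map CN.gen := by
        intro l
        induction l with
        | nil => intro _; exact ⟨[], rfl⟩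
        | cons a t ih =>
          intro hl
          obtain ⟨s, hs⟩ := hl a (by simp)
          obtain ⟨w, hw⟩ := ih (fun y hy => hl y (List.mem_cons_of_mem a hy))
          exact ⟨s :: w, by rw [List.map_cons, ← hw]; exact congrArg (· :: _) hs⟩
      obtain ⟨w, hw⟩ := exw (g :: fs) (by
        intro y hy
        rcases List.mem_cons.1 hy with h | h
        · exact h ▸ hg
        · exact hfs y h)
      refine ⟨w, ?_, ?_⟩
      · have hwl : w.length = fs.length + 1 := by
          have := congrArg List.length hw
          simpa using this.symm
        simp only [Set.mem_setOf_eq]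
        omega
      · show (w.map CN.gen).prod = _
        rw [← hw, List.prod_cons, List.prod_eq_foldl, CN.mul_foldl_end, mul_one]
  exact Set.Finite.subset
    (Set.Finite.insert _ (Set.Finite.image _ (List.finite_length_le S n))) hsub
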